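/- In the direct power S = (IO∞(ℤ))ⁿ, if 𝔠 is a congruence and α, β are distinct 𝔠-equivalent elements, then there exists ϖ ∈ S with ϖ 𝔠-equivalent to the identity 𝕀 of S and with the set of coordinates where ϖ differs from 𝕀 equal to the set of coordinates where α differs from β. -/

import Mathlib

/-- A partial injective self-map of ℤ (encoded as a `PEquiv`) is monotone. -/
def PMono (f : ℤ ≃. ℤ) : Prop :=
  ∀ x y a b : ℤ, a ∈ f x → b ∈ f y → x ≤ y → a ≤ b

/-- Domain of a partial injective self-map of ℤ. -/
def PDom (f : ℤ ≃. ℤ) : Set ℤ := {x | (f x).isSome}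

/-- Range of a partial injective self-map of ℤ. -/
def PRan (f : ℤ ≃. ℤ) : Set ℤ := {y | (f.symm y).isSome}

/-- Membership in IO∞(ℤ): injective (built into `PEquiv`), monotone,
with cofinite domain and cofinite range. -/
def IOZ (f : ℤ ≃. ℤ) : Prop :=
  PMono f ∧ (PDom f)ᶜ.Finite ∧ (PRan f)ᶜ.Finite

/-- Idempotent element of IO∞(ℤ). -/
def IsIdem (ε : ℤ ≃. ℤ) : Prop := ε.trans ε = ε

/-- Membership in the direct power (IO∞(ℤ))ⁿ. -/
def IOZn (n : ℕ) (α : Fin n → ℤ ≃. ℤ) : Prop := ∀ i, IOZ (α i)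

/-- Coordinatewise composition on the direct power (α then β, as in the paper). -/
def mulN {n : ℕ} (α β : Fin n → ℤ ≃. ℤ) : Fin n → ℤ ≃. ℤ := fun i => (α i).trans (β i)

/-- The identity 𝕀 of (IO∞(ℤ))ⁿ. -/
def oneN (n : ℕ) : Fin n → ℤ ≃. ℤ := fun _ => PEquiv.refl ℤ

/-- εᵢ°: the tuple with ε in coordinate i and identities elsewhere. -/
def epsT {n : ℕ} (i : Fin n) (ε : ℤ ≃. ℤ) : Fin n → ℤ ≃. ℤ :=
  fun j => if j = i then ε else PEquiv.refl ℤ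

/-- A congruence on the semigroup (IO∞(ℤ))ⁿ (relative to the carrier `IOZn n`). -/
def IsCongOn (n : ℕ) (ρ : (Fin n → ℤ ≃. ℤ) → (Fin n → ℤ ≃. ℤ) → Prop) : Prop :=
  (∀ α, IOZn n α → ρ α α) ∧
  (∀ α β, IOZn n α → IOZn n β → ρ α β → ρ β α) ∧
  (∀ α β γ, IOZn n α → IOZn n β → IOZn n γ → ρ α β → ρ β γ → ρ α γ) ∧
  (∀ α β γ, IOZn n α → IOZn n β → IOZn n γ → ρ α β →
    ρ (mulN α γ) (mulN β γ) ∧ ρ (mulN γ α) (mulN γ β))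

/-- The congruence σ_[i]. -/
def sigmaI (n : ℕ) (i : Fin n) (α β : Fin n → ℤ ≃. ℤ) : Prop :=
  ∃ ε : ℤ ≃. ℤ, IOZ ε ∧ IsIdem ε ∧ mulN α (epsT i ε) = mulN β (epsT i ε)

/-- D(α,β): the set of coordinates where α and β differ. -/
def Dset {n : ℕ} (α β : Fin n → ℤ ≃. ℤ) : Set (Fin n) := {i | α i ≠ β i}

/-- Idempotent tuple. -/
def IsIdemN {n : ℕ} (ε : Fin n → ℤ ≃. ℤ) : Prop := ∀ i, (ε i).trans (ε i) = ε i

/-- σ_[i₁,…,i_k] for the set of indices t: α and β agree after right multiplication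
by a product ε°_{i₁}⋯ε°_{i_k} of idempotents supported on t. -/
def sigmaSet (n : ℕ) (t : Finset (Fin n)) (α β : Fin n → ℤ ≃. ℤ) : Prop :=
  ∃ ε : Fin n → ℤ ≃. ℤ, IOZn n ε ∧ IsIdemN ε ∧ (∀ i ∉ t, ε i = PEquiv.refl ℤ) ∧
    mulN α ε = mulN β ε


/-!
Fix a coordinate and choose a total `u ∈ IO∞(ℤ)` whose range lies in the domain of `α`. Multiplying
`α 𝔠 β` by `u` on the left and by `(uα)⁻¹` on the right gives `𝕀 = (uα)(uα)⁻¹ 𝔠 π := (uβ)(uα)⁻¹`.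
If `α ⊆ β` then `uβ = uα` and `π = id`; otherwise some `a₀` has `α a₀ ≠ β a₀`, and choosing `u` to
hit `a₀` while skipping the finite set `(dom α)ᶜ ∪ {α⁻¹ β a₀}` makes `π` undefined at `u⁻¹ a₀`.
Doing the same with `α` and `β` swapped and multiplying, `ϖ := π π'` is `𝕀`-related and is the
identity exactly at the coordinates where `α ⊆ β ⊆ α`.
-/

namespace PEquiv

variable {X Y Z : Type*}

lemma trans_mono_right (u : X ≃. Y) {f g : Y ≃. Z} (h : f ≤ g) : u.trans f ≤ u.trans g := by
  intro x z hz
  obtain ⟨y, hy, hfy⟩ := (mem_trans u f x z).mp hz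
  exact (mem_trans u g x z).mpr ⟨y, hy, h y z hfy⟩

lemma eq_of_le_of_forall_isSome {f g : X ≃. Y} (h : f ≤ g) (hf : ∀ x, (f x).isSome) : f = g := by
  ext x y
  obtain ⟨z, hz⟩ := Option.isSome_iff_exists.mp (hf x)
  have hgz : g x = some z := h x z hz
  rw [hz, hgz]

lemma trans_symm_eq_refl_of_le {f g : X ≃. Y} (hf : ∀ x, (f x).isSome) (h : f ≤ g) :
    g.trans f.symm = PEquiv.refl X := by
  rw [← eq_of_le_of_forall_isSome h hf, trans_symm_eq_iff_forall_isSome]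
  exact hf

lemma ne_refl_of_eq_none {f : X ≃. X} {x : X} (hx : f x = none) : f ≠ PEquiv.refl X := by
  rintro rfl
  exact Option.some_ne_none x hx

lemma trans_ne_refl_of_eq_none {f : X ≃. Y} {x : X} (hx : f x = none) (g : Y ≃. X) :
    f.trans g ≠ PEquiv.refl X :=
  ne_refl_of_eq_none (x := x) (by simp [PEquiv.trans, hx])

def DetectsLE (u : X ≃. Y) (α β : Y ≃. Z) : Prop :=
  (∀ x, ((u.trans α) x).isSome) ∧
    (¬ α ≤ β → ∃ x, ((u.trans β).trans (u.trans α).symm) x = none)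

lemma DetectsLE.eq_refl {u : X ≃. Y} {α β : Y ≃. Z} (hu : DetectsLE u α β) (h : α ≤ β) :
    (u.trans β).trans (u.trans α).symm = PEquiv.refl X :=
  trans_symm_eq_refl_of_le hu.1 (trans_mono_right u h)

lemma DetectsLE.trans_eq_refl_iff {u v : X ≃. Y} {α β : Y ≃. Z} (hu : DetectsLE u α β)
    (hv : DetectsLE v β α) :
    ((u.trans β).trans (u.trans α).symm).trans ((v.trans α).trans (v.trans β).symm) =
      PEquiv.refl X ↔ α = β := by
  constructor
  · intro h
    by_contra hne
    by_cases hαβ : α ≤ β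
    · obtain ⟨x, hx⟩ := hv.2 fun hβα => hne (le_antisymm hαβ hβα)
      rw [hu.eq_refl hαβ, refl_trans] at h
      exact ne_refl_of_eq_none hx h
    · obtain ⟨x, hx⟩ := hu.2 hαβ
      exact trans_ne_refl_of_eq_none hx _ h
  · rintro rfl
    rw [hu.eq_refl le_rfl, hv.eq_refl le_rfl, refl_trans]

end PEquiv

lemma PMono.symm {f : ℤ ≃. ℤ} (hf : PMono f) : PMono f.symm := by
  intro x y a b ha hb hxy
  rw [PEquiv.mem_iff_mem] at ha hb
  by_contra! hba
  obtain rfl : x = y := le_antisymm hxy (hf b a y x hb ha hba.le)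
  exact hba.ne (PEquiv.inj f hb ha)

lemma PMono.trans {f g : ℤ ≃. ℤ} (hf : PMono f) (hg : PMono g) : PMono (f.trans g) := by
  intro x y a b ha hb hxy
  obtain ⟨c, hc, hca⟩ := (PEquiv.mem_trans f g x a).mp ha
  obtain ⟨d, hd, hdb⟩ := (PEquiv.mem_trans f g y b).mp hb
  exact hg c d a b hca hdb (hf x y c d hc hd hxy)

lemma compl_pDom_trans_finite {f g : ℤ ≃. ℤ} (hf : (PDom f)ᶜ.Finite) (hg : (PDom g)ᶜ.Finite) :
    (PDom (f.trans g))ᶜ.Finite := by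
  have hsub : (PDom (f.trans g))ᶜ ⊆ (PDom f)ᶜ ∪ ⋃ y ∈ (PDom g)ᶜ, {x | f x = some y} := by
    intro x hx
    rcases hfx : f x with _ | y
    · exact Or.inl (by simp [PDom, hfx])
    · refine Or.inr (Set.mem_biUnion ?_ hfx)
      simpa [PDom, PEquiv.trans, hfx] using hx
  refine (hf.union (hg.biUnion fun y _ => Set.Subsingleton.finite ?_)).subset hsub
  exact fun a ha b hb => PEquiv.inj f (Option.mem_def.mpr ha) (Option.mem_def.mpr hb)

lemma IOZ_refl : IOZ (PEquiv.refl ℤ) := by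
  refine ⟨fun x y a b ha hb hxy => ?_, ?_, ?_⟩
  · simp only [PEquiv.refl_apply, Option.mem_def, Option.some.injEq] at ha hb
    omega
  all_goals simp [PDom, PRan]

lemma IOZ.symm {f : ℤ ≃. ℤ} (hf : IOZ f) : IOZ f.symm :=
  ⟨hf.1.symm, hf.2.2, hf.2.1⟩

lemma IOZ.trans {f g : ℤ ≃. ℤ} (hf : IOZ f) (hg : IOZ g) : IOZ (f.trans g) :=
  ⟨hf.1.trans hg.1, compl_pDom_trans_finite hf.2.1 hg.2.1,
    compl_pDom_trans_finite (f := g.symm) (g := f.symm) hg.2.2 hf.2.2⟩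

def skipIcc (m M a₀ : ℤ) (hm : m ≤ a₀) (hM : a₀ ≤ M) : ℤ ≃. ℤ where
  toFun x := some (if x < m then x else if x = m then a₀ else x + (M - m))
  invFun y := if y = a₀ then some m else if y < m then some y
    else if M < y then some (y - (M - m)) else none
  inv a b := by split_ifs <;> grind

section skipIcc

variable {m M a₀ : ℤ} (hm : m ≤ a₀) (hM : a₀ ≤ M)

lemma skipIcc_apply (x : ℤ) :
    skipIcc m M a₀ hm hM x = some (if x < m then x else if x = m then a₀ else x + (M - m)) :=
  rfl

lemma skipIcc_symm_apply (y : ℤ) :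
    (skipIcc m M a₀ hm hM).symm y = if y = a₀ then some m else if y < m then some y
      else if M < y then some (y - (M - m)) else none :=
  rfl

lemma skipIcc_symm_eq_none {y : ℤ} (hy : y ∈ Set.Icc m M) (hya : y ≠ a₀) :
    (skipIcc m M a₀ hm hM).symm y = none := by
  rw [skipIcc_symm_apply]
  split_ifs <;> grind

lemma IOZ_skipIcc : IOZ (skipIcc m M a₀ hm hM) := by
  refine ⟨?_, by simp [PDom, skipIcc_apply], (Set.finite_Icc m M).subset ?_⟩
  · intro x y a b ha hb hxy
    simp only [skipIcc_apply, Option.mem_def, Option.some.injEq] at ha hb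
    split_ifs at ha hb <;> omega
  · intro y hy
    simp only [Set.mem_compl_iff, PRan, Set.mem_ofPred_eq, skipIcc_symm_apply] at hy
    split_ifs at hy <;> simp_all

end skipIcc

lemma exists_IOZ_total_of_finite {G : Set ℤ} (hG : G.Finite) {a₀ : ℤ} (ha₀ : a₀ ∉ G) :
    ∃ u : ℤ ≃. ℤ, IOZ u ∧ (∀ x, (u x).isSome) ∧ (∀ y ∈ G, u.symm y = none) ∧
      ∃ x₀, u x₀ = some a₀ := by
  obtain ⟨m, hm⟩ := (hG.insert a₀).bddBelow
  obtain ⟨M, hM⟩ := (hG.insert a₀).bddAbove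
  have hma : m ≤ a₀ := hm (Set.mem_insert a₀ G)
  have haM : a₀ ≤ M := hM (Set.mem_insert a₀ G)
  refine ⟨skipIcc m M a₀ hma haM, IOZ_skipIcc hma haM, fun x => by simp [skipIcc_apply],
    fun y hy => ?_, m, by simp [skipIcc_apply]⟩
  exact skipIcc_symm_eq_none hma haM ⟨hm (Set.mem_insert_of_mem a₀ hy),
    hM (Set.mem_insert_of_mem a₀ hy)⟩ fun h => ha₀ (h ▸ hy)

lemma exists_IOZ_detectsLE {α : ℤ ≃. ℤ} (hα : IOZ α) (β : ℤ ≃. ℤ) :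
    ∃ u : ℤ ≃. ℤ, IOZ u ∧ PEquiv.DetectsLE u α β := by
  obtain ⟨G, hG, hdom, a₀, ha₀, hsep⟩ : ∃ G : Set ℤ, G.Finite ∧ (PDom α)ᶜ ⊆ G ∧ ∃ a₀ ∉ G,
      ¬ α ≤ β → ∀ a ∈ (β.trans α.symm) a₀, a ∈ G := by
    by_cases hαβ : α ≤ β
    · obtain ⟨a₀, ha₀⟩ := hα.2.1.infinite_compl.nonempty
      exact ⟨_, hα.2.1, subset_rfl, a₀, ha₀, absurd hαβ⟩
    · obtain ⟨a₀, y₀, hy₀, hβy₀⟩ : ∃ a₀ y₀, y₀ ∈ α a₀ ∧ y₀ ∉ β a₀ := by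
        simpa [PEquiv.le_def] using hαβ
      refine ⟨(PDom α)ᶜ ∪ {a | a ∈ (β.trans α.symm) a₀}, hα.2.1.union ?_,
        Set.subset_union_left, a₀, ?_, fun _ a ha => Or.inr ha⟩
      · exact Set.Subsingleton.finite fun a ha b hb => Option.mem_unique ha hb
      · rintro (ha₀ | ha₀)
        · exact ha₀ (Option.isSome_iff_exists.mpr ⟨y₀, hy₀⟩)
        · obtain ⟨c, hc, hca⟩ := (PEquiv.mem_trans _ _ _ _).mp ha₀
          rw [PEquiv.mem_iff_mem] at hca
          exact hβy₀ (Option.mem_unique hca hy₀ ▸ hc)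
  obtain ⟨u, hu, htot, havoid, x₀, hx₀⟩ := exists_IOZ_total_of_finite hG ha₀
  have hran : ∀ x r, u x = some r → r ∉ G := fun x r hr hrG => by
    simpa [havoid r hrG] using u.eq_some_iff.mpr hr
  refine ⟨u, hu, fun x => ?_, fun hαβ => ⟨x₀, ?_⟩⟩
  · obtain ⟨r, hr⟩ := Option.isSome_iff_exists.mp (htot x)
    have hrα : r ∈ PDom α := by_contra fun h => hran x r hr (hdom h)
    simpa [PEquiv.trans, hr, PDom] using hrα
  · have hx₀' : ((u.trans β).trans (u.trans α).symm) x₀ = ((β.trans α.symm) a₀).bind u.symm := by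
      rw [PEquiv.symm_trans_rev, PEquiv.trans_assoc, ← PEquiv.trans_assoc β]
      simp [PEquiv.trans, hx₀]
    rcases ha : (β.trans α.symm) a₀ with _ | a
    · rw [hx₀', ha, Option.bind_none]
    · rw [hx₀', ha, Option.bind_some, havoid a (hsep hαβ a ha)]

section Power

variable {n : ℕ}

def invN (α : Fin n → ℤ ≃. ℤ) : Fin n → ℤ ≃. ℤ := fun i => (α i).symm

lemma IOZn_oneN : IOZn n (oneN n) := fun _ => IOZ_refl

lemma IOZn.invN {α : Fin n → ℤ ≃. ℤ} (hα : IOZn n α) : IOZn n (invN α) := fun i => (hα i).symm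

lemma IOZn.mulN {α β : Fin n → ℤ ≃. ℤ} (hα : IOZn n α) (hβ : IOZn n β) : IOZn n (mulN α β) :=
  fun i => (hα i).trans (hβ i)

lemma mulN_invN_eq_oneN {γ : Fin n → ℤ ≃. ℤ} (hγ : ∀ i x, ((γ i) x).isSome) :
    mulN γ (invN γ) = oneN n :=
  funext fun i => PEquiv.trans_symm_eq_iff_forall_isSome.mpr (hγ i)

lemma IOZn.exists_detectsLE {α : Fin n → ℤ ≃. ℤ} (hα : IOZn n α) (β : Fin n → ℤ ≃. ℤ) :
    ∃ u, IOZn n u ∧ ∀ i, PEquiv.DetectsLE (u i) (α i) (β i) := by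
  choose u hu hu_det using fun i => exists_IOZ_detectsLE (hα i) (β i)
  exact ⟨u, hu, hu_det⟩

variable {ρ : (Fin n → ℤ ≃. ℤ) → (Fin n → ℤ ≃. ℤ) → Prop}

lemma IsCongOn.rel_oneN_of_rel (hρ : IsCongOn n ρ) {α β u : Fin n → ℤ ≃. ℤ} (hα : IOZn n α)
    (hβ : IOZn n β) (hu : IOZn n u) (hab : ρ α β)
    (htot : ∀ i x, (((u i).trans (α i)) x).isSome) :
    ρ (oneN n) (mulN (mulN u β) (invN (mulN u α))) := by
  have hu_ab : ρ (mulN u α) (mulN u β) := (hρ.2.2.2 α β u hα hβ hu hab).2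
  have h := (hρ.2.2.2 _ _ _ (hu.mulN hα) (hu.mulN hβ) (hu.mulN hα).invN hu_ab).1
  rwa [mulN_invN_eq_oneN (γ := mulN u α) htot] at h

lemma IsCongOn.rel_oneN_mulN (hρ : IsCongOn n ρ) {π₁ π₂ : Fin n → ℤ ≃. ℤ} (hπ₁ : IOZn n π₁)
    (hπ₂ : IOZn n π₂) (h₁ : ρ (oneN n) π₁) (h₂ : ρ (oneN n) π₂) : ρ (oneN n) (mulN π₁ π₂) := by
  have h : ρ (mulN (oneN n) π₂) (mulN π₁ π₂) :=
    (hρ.2.2.2 _ _ _ IOZn_oneN hπ₁ hπ₂ h₁).1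
  have hone : mulN (oneN n) π₂ = π₂ := funext fun i => PEquiv.refl_trans _
  rw [hone] at h
  exact hρ.2.2.1 _ _ _ IOZn_oneN hπ₂ (hπ₁.mulN hπ₂) h₂ h

end Power

theorem stmt13_general (n : ℕ) (ρ : (Fin n → ℤ ≃. ℤ) → (Fin n → ℤ ≃. ℤ) → Prop)
    (hρ : IsCongOn n ρ) (α β : Fin n → ℤ ≃. ℤ) (hα : IOZn n α) (hβ : IOZn n β)
    (hab : ρ α β) :
    ∃ ϖ : Fin n → ℤ ≃. ℤ, IOZn n ϖ ∧ ρ (oneN n) ϖ ∧ Dset (oneN n) ϖ = Dset α β := by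
  obtain ⟨u, hu, hu_det⟩ := hα.exists_detectsLE β
  obtain ⟨v, hv, hv_det⟩ := hβ.exists_detectsLE α
  have hπ₁ : IOZn n (mulN (mulN u β) (invN (mulN u α))) := (hu.mulN hβ).mulN (hu.mulN hα).invN
  have hπ₂ : IOZn n (mulN (mulN v α) (invN (mulN v β))) := (hv.mulN hα).mulN (hv.mulN hβ).invN
  have h₁ := hρ.rel_oneN_of_rel hα hβ hu hab fun i => (hu_det i).1
  have h₂ := hρ.rel_oneN_of_rel hβ hα hv (hρ.2.1 α β hα hβ hab) fun i => (hv_det i).1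
  refine ⟨_, hπ₁.mulN hπ₂, hρ.rel_oneN_mulN hπ₁ hπ₂ h₁ h₂, Set.ext fun i => ?_⟩
  exact ne_comm.trans (not_congr ((hu_det i).trans_eq_refl_iff (hv_det i)))

/-- from distinct 𝔠-equivalent α, β one gets ϖ with 𝕀 𝔠 ϖ and
D(𝕀,ϖ) = D(α,β). -/
theorem stmt13 (n : ℕ) (ρ : (Fin n → ℤ ≃. ℤ) → (Fin n → ℤ ≃. ℤ) → Prop)
    (hρ : IsCongOn n ρ) (α β : Fin n → ℤ ≃. ℤ) (hα : IOZn n α) (hβ : IOZn n β)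
    (hab : ρ α β) (hne : α ≠ β) :
    ∃ ϖ : Fin n → ℤ ≃. ℤ, IOZn n ϖ ∧ ρ (oneN n) ϖ ∧ Dset (oneN n) ϖ = Dset α β :=
  stmt13_general n ρ hρ α β hα hβ hab
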